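/- Let ε ∈ (0,1), δ ∈ (0,1), and T ≥ 0 a natural number. Then the gain of the guided framework satisfies the exponential lower bound 𝒢(T) = ((1-ε·δ)/(1-ε))^T ≥ exp(T·ε·(1-δ)). -/

import Mathlib

/-! The guided one-step odds `(1 - εδ)/(1 - ε)` dominate `1/(1 - ε(1 - δ))`, which dominates
`exp (ε(1 - δ))` since `exp x ≤ 1/(1 - x)` for `0 ≤ x < 1`; raising to the `T`-th power gives the bound. -/

-- `(1 - εδ)(1 - ε(1 - δ)) = (1 - ε) + ε²δ(1 - δ)`.
theorem one_div_one_sub_mul_one_sub_le_div {ε δ : ℝ} (hε : ε < 1) (hδ₀ : 0 ≤ δ) (hδ₁ : δ ≤ 1) :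
    1 / (1 - ε * (1 - δ)) ≤ (1 - ε * δ) / (1 - ε) := by
  have hε' : 0 < 1 - ε := by linarith
  have hx : 0 < 1 - ε * (1 - δ) := by nlinarith [mul_nonneg (sub_nonneg.2 hδ₁) hε'.le]
  rw [div_le_div_iff₀ hx hε']
  nlinarith [mul_nonneg (mul_nonneg hδ₀ (sub_nonneg.2 hδ₁)) (sq_nonneg ε)]

theorem exp_mul_one_sub_le_div {ε δ : ℝ} (hε₀ : 0 ≤ ε) (hε₁ : ε < 1) (hδ₀ : 0 ≤ δ) (hδ₁ : δ ≤ 1) :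
    Real.exp (ε * (1 - δ)) ≤ (1 - ε * δ) / (1 - ε) :=
  calc Real.exp (ε * (1 - δ))
      ≤ 1 / (1 - ε * (1 - δ)) :=
        Real.exp_bound_div_one_sub_of_interval (mul_nonneg hε₀ (by linarith)) (by nlinarith)
    _ ≤ (1 - ε * δ) / (1 - ε) := one_div_one_sub_mul_one_sub_le_div hε₁ hδ₀ hδ₁

/-- Exponential lower bound on the gain of the guided framework:
`𝒢(T) = ((1-ε·δ)/(1-ε))^T ≥ exp(T·ε·(1-δ))`. -/
theorem guided_gain_exp_lower_bound
    (ε δ : ℝ) (hε : ε ∈ Set.Ioo (0 : ℝ) 1) (hδ : δ ∈ Set.Ioo (0 : ℝ) 1)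
    (T : ℕ) :
    ((1 - ε * δ) / (1 - ε)) ^ T ≥ Real.exp (T * (ε * (1 - δ))) := by
  rw [ge_iff_le, Real.exp_nat_mul]
  exact pow_le_pow_left₀ (Real.exp_pos _).le
    (exp_mul_one_sub_le_div hε.1.le hε.2 hδ.1.le hδ.2.le) T
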